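/- arXiv:1907.09522 — 3 statements merged into one kernel-verified Lean document; each statement's English description precedes it below -/
import Mathlib

section
/- Let Q1 ∈ ℝ^{p×k1} and B1 ∈ ℝ^{p×(p−k1)} be such that the p×p matrix (Q1, B1) is orthogonal, and let Q2 ∈ ℝ^{p×k2} satisfy Q2ᵀQ2 = I_{k2}. If D(Q1,Q2) ≥ d for some d ≥ 0, then ‖B1ᵀQ2‖₂² ≥ τ d², where τ = min(k1/k2, k2/k1) and ‖·‖₂ denotes the matrix spectral norm (largest singular value). -/
/-!
Since `(Q1, B1)` is orthogonal, `B1 B1ᵀ = I - Q1 Q1ᵀ`, so the squared Frobenius norm of `B1ᵀ Q2`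
is `k2 - tr(Q1 Q1ᵀ Q2 Q2ᵀ) ≥ min(k1, k2) d²`. Each of its `k2` columns has squared length at most
`‖B1ᵀ Q2‖₂²`, and `τ ≤ min(k1, k2) / k2`.
-/

open Matrix

/-- Spectral norm (largest singular value) of a real matrix, defined as the operator
norm of the induced linear map between Euclidean spaces. -/
noncomputable def spec {m n : ℕ} (A : Matrix (Fin m) (Fin n) ℝ) : ℝ :=
  ‖LinearMap.toContinuousLinearMap (Matrix.toEuclideanLin A)‖

section Spectral

variable {m n : ℕ}

lemma sum_sq_apply_le_spec_sq (M : Matrix (Fin m) (Fin n) ℝ) (j : Fin n) :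
    ∑ i, M i j ^ 2 ≤ spec M ^ 2 := by
  set T := LinearMap.toContinuousLinearMap (Matrix.toEuclideanLin M)
  have hcol : ‖T (EuclideanSpace.single j 1)‖ ^ 2 = ∑ i, M i j ^ 2 := by
    simp [T, EuclideanSpace.real_norm_sq_eq, Matrix.toLpLin_apply]
  have hle : ‖T (EuclideanSpace.single j 1)‖ ≤ spec M := by
    show _ ≤ ‖T‖
    simpa [PiLp.norm_single] using T.le_opNorm (EuclideanSpace.single j 1)
  rw [← hcol]
  gcongr

lemma trace_transpose_mul_self_le (M : Matrix (Fin m) (Fin n) ℝ) :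
    (Mᵀ * M).trace ≤ n * spec M ^ 2 := by
  calc (Mᵀ * M).trace = ∑ j, ∑ i, M i j ^ 2 := by simp [Matrix.trace, Matrix.mul_apply, sq]
    _ ≤ ∑ _j : Fin n, spec M ^ 2 := Finset.sum_le_sum fun j _ => sum_sq_apply_le_spec_sq M j
    _ = n * spec M ^ 2 := by simp

end Spectral

section Projection

variable {R m k l n : Type*} [CommRing R] [Fintype m] [Fintype l] [Fintype n]
  [DecidableEq m] [DecidableEq n]

lemma mul_transpose_add_mul_transpose_eq_one [Fintype k] [DecidableEq k] [DecidableEq l]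
    {Q : Matrix m k R} {B : Matrix m l R}
    (hcard : Fintype.card k + Fintype.card l = Fintype.card m)
    (hQ : Qᵀ * Q = 1) (hB : Bᵀ * B = 1) (hQB : Qᵀ * B = 0) :
    Q * Qᵀ + B * Bᵀ = 1 := by
  have hBQ : Bᵀ * Q = 0 := by simpa using congrArg transpose hQB
  have hleft : fromRows Qᵀ Bᵀ * fromCols Q B = 1 := by
    rw [fromRows_mul_fromCols, hQ, hB, hQB, hBQ, fromBlocks_one]
  rw [← fromCols_mul_fromRows]
  exact (mul_eq_one_comm_of_card_eq (m := k ⊕ l) (n := m) (R := R)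
    (by simpa using hcard)).mp hleft

lemma trace_transpose_mul_self_eq_card_sub {P : Matrix m m R} {B : Matrix m l R}
    {Q : Matrix m n R} (hPB : P + B * Bᵀ = 1) (hQ : Qᵀ * Q = 1) :
    ((Bᵀ * Q)ᵀ * (Bᵀ * Q)).trace = Fintype.card n - (P * (Q * Qᵀ)).trace := by
  have hB : B * Bᵀ = 1 - P := eq_sub_of_add_eq' hPB
  calc ((Bᵀ * Q)ᵀ * (Bᵀ * Q)).trace = (Qᵀ * (B * Bᵀ) * Q).trace := by
        simp only [transpose_mul, transpose_transpose, Matrix.mul_assoc]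
    _ = (Qᵀ * Q).trace - (Qᵀ * P * Q).trace := by
        rw [hB, Matrix.mul_sub, Matrix.sub_mul, Matrix.mul_one, trace_sub]
    _ = Fintype.card n - (P * (Q * Qᵀ)).trace := by
        rw [hQ, trace_one, trace_mul_cycle, trace_mul_comm]

end Projection

lemma min_div_div_le_min_div {a b : ℕ} (ha : 0 < a) (hb : 0 < b) :
    min ((a : ℝ) / b) ((b : ℝ) / a) ≤ (min a b : ℕ) / b := by
  rcases le_total a b with hab | hba
  · simp [min_eq_left hab]
  · rw [min_eq_right hba, div_self (by positivity)]
    exact (min_le_right _ _).trans (div_le_one_of_le₀ (by exact_mod_cast hba) (by positivity))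

/-- If `(Q1, B1)` is a `p × p` orthogonal matrix, `Q2ᵀQ2 = I`, and
`D(Q1,Q2) ≥ d` with `d ≥ 0`, then `‖B1ᵀ Q2‖₂² ≥ τ d²` where
`τ = min(k1/k2, k2/k1)`. -/
theorem stmt4 {p k1 k2 : ℕ} (hk1 : 0 < k1) (hk2 : 0 < k2) (hk1p : k1 ≤ p)
    (Q1 : Matrix (Fin p) (Fin k1) ℝ) (B1 : Matrix (Fin p) (Fin (p - k1)) ℝ)
    (Q2 : Matrix (Fin p) (Fin k2) ℝ)
    (hQ1 : Q1ᵀ * Q1 = 1) (hB1 : B1ᵀ * B1 = 1) (hQB : Q1ᵀ * B1 = 0)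
    (hQ2 : Q2ᵀ * Q2 = 1)
    (d : ℝ) (hd : 0 ≤ d)
    (hD : d ≤ Real.sqrt (1 - (Q1 * Q1ᵀ * (Q2 * Q2ᵀ)).trace / (min k1 k2 : ℕ))) :
    min ((k1 : ℝ) / k2) ((k2 : ℝ) / k1) * d ^ 2 ≤ spec (B1ᵀ * Q2) ^ 2 := by
  obtain rfl | hd0 := hd.eq_or_lt
  · simp only [ne_eq, OfNat.ofNat_ne_zero, not_false_eq_true, zero_pow, mul_zero]
    positivity
  set t := (Q1 * Q1ᵀ * (Q2 * Q2ᵀ)).trace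
  set μ : ℝ := ((min k1 k2 : ℕ) : ℝ)
  have hμ : 0 < μ := by positivity
  have hproj : Q1 * Q1ᵀ + B1 * B1ᵀ = 1 :=
    mul_transpose_add_mul_transpose_eq_one (by simp only [Fintype.card_fin]; omega) hQ1 hB1 hQB
  have hfrob : (k2 : ℝ) - t ≤ k2 * spec (B1ᵀ * Q2) ^ 2 := by
    have := trace_transpose_mul_self_le (B1ᵀ * Q2)
    rwa [trace_transpose_mul_self_eq_card_sub hproj hQ2, Fintype.card_fin] at this
  have hd2 : μ * d ^ 2 ≤ μ - t := by
    have h : t / μ ≤ 1 - d ^ 2 := by linarith [(Real.le_sqrt' hd0).1 hD]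
    rw [div_le_iff₀ hμ] at h
    linarith
  have hμk2 : μ ≤ k2 := by simp [μ]
  calc min ((k1 : ℝ) / k2) ((k2 : ℝ) / k1) * d ^ 2 ≤ μ / k2 * d ^ 2 := by
        gcongr; exact min_div_div_le_min_div hk1 hk2
    _ = μ * d ^ 2 / k2 := by ring
    _ ≤ spec (B1ᵀ * Q2) ^ 2 := by
        rw [div_le_iff₀ (by positivity)]; linarith
end

section
/- In the change-point factor model with white-noise orthogonality, let B_i ∈ ℝ^{p×(p−k_i)} have orthonormal columns and satisfy B_iᵀ A_i = 0 (i = 1,2). Then for every integer h ≥ 1: B1ᵀ Σ_{y,1}(h,γ) = 0 whenever ⌊γn⌋ ≤ r0, and B2ᵀ Σ_{y,2}(h,γ) = 0 whenever ⌊γn⌋ ≥ r0. Consequently, with M_i(γ) = Σ_{h=1}^{h0} Σ_{y,i}(h,γ) Σ_{y,i}(h,γ)ᵀ and G(γ) = ‖B1ᵀ M_1(γ) B1‖₂ + ‖B2ᵀ M_2(γ) B2‖₂, one has G(γ0) = 0. -/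
open Matrix MeasureTheory Finset

/-- Entrywise expectation of the outer product `E[u vᵀ]`. -/
noncomputable def outerE {Ω : Type} [MeasurableSpace Ω] (μ : Measure Ω) {a b : ℕ}
    (u : Ω → Fin a → ℝ) (v : Ω → Fin b → ℝ) : Matrix (Fin a) (Fin b) ℝ :=
  Matrix.of fun i j => ∫ ω, u ω i * v ω j ∂μ

/-- `Σ_{y,1}(h,γ) = (1/n)·Σ_{t=1}^{r−h} E[y_t y_{t+h}ᵀ]` where `r = ⌊γn⌋`. -/
noncomputable def SigY1 {Ω : Type} [MeasurableSpace Ω] (μ : Measure Ω) {p : ℕ}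
    (y : ℕ → Ω → Fin p → ℝ) (n h r : ℕ) : Matrix (Fin p) (Fin p) ℝ :=
  (n : ℝ)⁻¹ • ∑ t ∈ Finset.Icc 1 (r - h), outerE μ (y t) (y (t + h))

/-- `Σ_{y,2}(h,γ) = (1/n)·Σ_{t=r+1}^{n−h} E[y_t y_{t+h}ᵀ]` where `r = ⌊γn⌋`. -/
noncomputable def SigY2 {Ω : Type} [MeasurableSpace Ω] (μ : Measure Ω) {p : ℕ}
    (y : ℕ → Ω → Fin p → ℝ) (n h r : ℕ) : Matrix (Fin p) (Fin p) ℝ :=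
  (n : ℝ)⁻¹ • ∑ t ∈ Finset.Icc (r + 1) (n - h), outerE μ (y t) (y (t + h))

/-!
Within regime `i` the model reads `y_t = A_i x_t + e_t`. Expanding `E[y_t y_{t+h}ᵀ]` bilinearly,
every term either starts with `A_i`, which any `C` with `C A_i = 0` annihilates, or is one of the
cross moments `E[e_t x_{t+h}ᵀ]`, `E[e_t e_{t+h}ᵀ]`, which vanish by white-noise orthogonality.
Hence `B_iᵀ Σ_{y,i}(h, γ) = 0` as soon as the sum defining `Σ_{y,i}` stays inside regime `i`, and
at `γ₀` both matrices inside `G` are zero.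
-/

section OuterE

variable {Ω : Type} [MeasurableSpace Ω] {μ : Measure Ω}

lemma outerE_transpose {a b : ℕ} (u : Ω → Fin a → ℝ) (v : Ω → Fin b → ℝ) :
    (outerE μ u v)ᵀ = outerE μ v u := by
  ext i j
  simp [outerE, mul_comm]

lemma outerE_mulVec_add_left {a k b : ℕ} (A : Matrix (Fin a) (Fin k) ℝ)
    (x : Ω → Fin k → ℝ) (e : Ω → Fin a → ℝ) (v : Ω → Fin b → ℝ)
    (hxv : ∀ l j, Integrable (fun ω => x ω l * v ω j) μ)
    (hev : ∀ i j, Integrable (fun ω => e ω i * v ω j) μ) :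
    outerE μ (fun ω => A *ᵥ x ω + e ω) v = A * outerE μ x v + outerE μ e v := by
  ext i j
  have hAx : ∀ l ∈ (univ : Finset (Fin k)), Integrable (fun ω => A i l * (x ω l * v ω j)) μ :=
    fun l _ => (hxv l j).const_mul _
  have hexpand : (fun ω => (A *ᵥ x ω + e ω) i * v ω j)
      = fun ω => ∑ l, A i l * (x ω l * v ω j) + e ω i * v ω j := by
    funext ω
    simp [Matrix.mulVec, dotProduct, add_mul, Finset.sum_mul, mul_assoc]
  simp only [outerE, Matrix.of_apply, Matrix.add_apply, Matrix.mul_apply]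
  rw [hexpand, integral_add (integrable_finsetSum _ hAx) (hev i j),
    integral_finsetSum _ hAx]
  simp only [integral_const_mul]

lemma outerE_mulVec_add_right {a k b : ℕ} (A : Matrix (Fin b) (Fin k) ℝ)
    (x : Ω → Fin k → ℝ) (e : Ω → Fin b → ℝ) (u : Ω → Fin a → ℝ)
    (hux : ∀ l i, Integrable (fun ω => u ω i * x ω l) μ)
    (hue : ∀ j i, Integrable (fun ω => u ω i * e ω j) μ) :
    outerE μ u (fun ω => A *ᵥ x ω + e ω) = outerE μ u x * Aᵀ + outerE μ u e := by
  have h := congrArg Matrix.transpose <| outerE_mulVec_add_left (μ := μ) A x e u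
    (fun l j => by simpa only [mul_comm] using hux l j)
    (fun i j => by simpa only [mul_comm] using hue i j)
  rwa [outerE_transpose, Matrix.transpose_add, Matrix.transpose_mul, outerE_transpose,
    outerE_transpose] at h

lemma memLp_mulVec_add_apply {p k : ℕ} (A : Matrix (Fin p) (Fin k) ℝ) {x : Ω → Fin k → ℝ}
    {e : Ω → Fin p → ℝ} (hx : ∀ j, MemLp (fun ω => x ω j) 2 μ)
    (he : ∀ i, MemLp (fun ω => e ω i) 2 μ) (i : Fin p) :
    MemLp (fun ω => (A *ᵥ x ω + e ω) i) 2 μ := by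
  have hAx : MemLp (∑ l, fun ω => A i l * x ω l) 2 μ :=
    memLp_finsetSum' _ fun l _ => (hx l).const_mul _
  convert hAx.add (he i) using 1
  funext ω
  simp [Matrix.mulVec, dotProduct]

lemma mul_outerE_eq_zero_of_factor {p k q : ℕ} {A : Matrix (Fin p) (Fin k) ℝ}
    {C : Matrix (Fin q) (Fin p) ℝ} (hCA : C * A = 0) {xs xt : Ω → Fin k → ℝ}
    {es et ys yt : Ω → Fin p → ℝ}
    (hxs : ∀ j, MemLp (fun ω => xs ω j) 2 μ) (hxt : ∀ j, MemLp (fun ω => xt ω j) 2 μ)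
    (hes : ∀ i, MemLp (fun ω => es ω i) 2 μ) (het : ∀ i, MemLp (fun ω => et ω i) 2 μ)
    (hys : ∀ ω, ys ω = A *ᵥ xs ω + es ω) (hyt : ∀ ω, yt ω = A *ᵥ xt ω + et ω)
    (hee : outerE μ es et = 0) (hxe : outerE μ xt es = 0) :
    C * outerE μ ys yt = 0 := by
  rw [funext hys, funext hyt]
  have hnoise : outerE μ es (fun ω => A *ᵥ xt ω + et ω) = 0 := by
    rw [outerE_mulVec_add_right A xt et es (fun l i => (hes i).integrable_mul (hxt l))
      (fun j i => (hes i).integrable_mul (het j)), ← outerE_transpose, hxe, hee,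
      Matrix.transpose_zero, Matrix.zero_mul, add_zero]
  have hyt' := memLp_mulVec_add_apply A hxt het
  rw [outerE_mulVec_add_left A xs es _ (fun l j => (hxs l).integrable_mul (hyt' j))
    (fun i j => (hes i).integrable_mul (hyt' j)), hnoise, add_zero, ← Matrix.mul_assoc, hCA,
    Matrix.zero_mul]

end OuterE

section Regime

variable {Ω : Type} [MeasurableSpace Ω] {μ : Measure Ω} {p k q : ℕ}
  {A : Matrix (Fin p) (Fin k) ℝ} {C : Matrix (Fin q) (Fin p) ℝ}
  {x : ℕ → Ω → Fin k → ℝ} {e y : ℕ → Ω → Fin p → ℝ}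

lemma mul_outerE_lag_eq_zero (hCA : C * A = 0) (hx : ∀ t j, MemLp (fun ω => x t ω j) 2 μ)
    (he : ∀ t i, MemLp (fun ω => e t ω i) 2 μ) (hee : ∀ s t, s ≠ t → outerE μ (e s) (e t) = 0)
    (hxe : ∀ t s, outerE μ (x t) (e s) = 0) {t h : ℕ} (hh : 1 ≤ h)
    (hyt : ∀ ω, y t ω = A *ᵥ x t ω + e t ω)
    (hyth : ∀ ω, y (t + h) ω = A *ᵥ x (t + h) ω + e (t + h) ω) :
    C * outerE μ (y t) (y (t + h)) = 0 :=
  mul_outerE_eq_zero_of_factor hCA (hx t) (hx (t + h)) (he t) (he (t + h)) hyt hyth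
    (hee t (t + h) (by omega)) (hxe (t + h) t)

lemma mul_SigY1_eq_zero (hCA : C * A = 0) (hx : ∀ t j, MemLp (fun ω => x t ω j) 2 μ)
    (he : ∀ t i, MemLp (fun ω => e t ω i) 2 μ) (hee : ∀ s t, s ≠ t → outerE μ (e s) (e t) = 0)
    (hxe : ∀ t s, outerE μ (x t) (e s) = 0) {n r0 h r : ℕ}
    (hmodel : ∀ t, 1 ≤ t → t ≤ r0 → ∀ ω, y t ω = A *ᵥ x t ω + e t ω)
    (hh : 1 ≤ h) (hr : r ≤ r0) :
    C * SigY1 μ y n h r = 0 := by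
  rw [SigY1, Matrix.mul_smul, Matrix.mul_sum, Finset.sum_eq_zero, smul_zero]
  intro t ht
  rw [Finset.mem_Icc] at ht
  exact mul_outerE_lag_eq_zero hCA hx he hee hxe hh (hmodel t ht.1 (by omega))
    (hmodel (t + h) (by omega) (by omega))

lemma mul_SigY2_eq_zero (hCA : C * A = 0) (hx : ∀ t j, MemLp (fun ω => x t ω j) 2 μ)
    (he : ∀ t i, MemLp (fun ω => e t ω i) 2 μ) (hee : ∀ s t, s ≠ t → outerE μ (e s) (e t) = 0)
    (hxe : ∀ t s, outerE μ (x t) (e s) = 0) {n r0 h r : ℕ}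
    (hmodel : ∀ t, r0 < t → t ≤ n → ∀ ω, y t ω = A *ᵥ x t ω + e t ω)
    (hh : 1 ≤ h) (hr : r0 ≤ r) :
    C * SigY2 μ y n h r = 0 := by
  rw [SigY2, Matrix.mul_smul, Matrix.mul_sum, Finset.sum_eq_zero, smul_zero]
  intro t ht
  rw [Finset.mem_Icc] at ht
  exact mul_outerE_lag_eq_zero hCA hx he hee hxe hh (hmodel t (by omega) (by omega))
    (hmodel (t + h) (by omega) (by omega))

end Regime

lemma mul_sum_mul_transpose_mul_eq_zero {ι : Type*} {a b c d : Type*} [Fintype b] [Fintype c]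
    {s : Finset ι} {S : ι → Matrix b c ℝ} {C : Matrix a b ℝ} (D : Matrix b d ℝ)
    (hS : ∀ i ∈ s, C * S i = 0) :
    C * (∑ i ∈ s, S i * (S i)ᵀ) * D = 0 := by
  rw [Matrix.mul_sum, Matrix.sum_mul]
  refine Finset.sum_eq_zero fun i hi => ?_
  rw [← Matrix.mul_assoc, hS i hi, Matrix.zero_mul, Matrix.zero_mul]

lemma spec_zero {m n : ℕ} : spec (0 : Matrix (Fin m) (Fin n) ℝ) = 0 := by
  simp only [spec, map_zero, norm_zero]

theorem stmt8_general {Ω : Type} [MeasurableSpace Ω] (μ : Measure Ω)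
    {p k1 k2 n r0 : ℕ}
    (A1 : Matrix (Fin p) (Fin k1) ℝ) (A2 : Matrix (Fin p) (Fin k2) ℝ)
    (x1 : ℕ → Ω → Fin k1 → ℝ) (x2 : ℕ → Ω → Fin k2 → ℝ)
    (e : ℕ → Ω → Fin p → ℝ) (y : ℕ → Ω → Fin p → ℝ)
    (hL2x1 : ∀ t j, MemLp (fun ω => x1 t ω j) 2 μ)
    (hL2x2 : ∀ t j, MemLp (fun ω => x2 t ω j) 2 μ)
    (hL2e : ∀ t i, MemLp (fun ω => e t ω i) 2 μ)
    (hmodel1 : ∀ t, 1 ≤ t → t ≤ r0 → ∀ ω, y t ω = A1.mulVec (x1 t ω) + e t ω)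
    (hmodel2 : ∀ t, r0 < t → t ≤ n → ∀ ω, y t ω = A2.mulVec (x2 t ω) + e t ω)
    (hee : ∀ s t, s ≠ t → outerE μ (e s) (e t) = 0)
    (hx1e : ∀ t s, outerE μ (x1 t) (e s) = 0)
    (hx2e : ∀ t s, outerE μ (x2 t) (e s) = 0)
    (B1 : Matrix (Fin p) (Fin (p - k1)) ℝ) (B2 : Matrix (Fin p) (Fin (p - k2)) ℝ)
    (hB1A1 : B1ᵀ * A1 = 0) (hB2A2 : B2ᵀ * A2 = 0)
    (h0 : ℕ) :
    (∀ h, 1 ≤ h → ∀ γ : ℝ, γ ∈ Set.Ioo (0:ℝ) 1 → ⌊γ * n⌋₊ ≤ r0 →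
      B1ᵀ * SigY1 μ y n h ⌊γ * n⌋₊ = 0) ∧
    (∀ h, 1 ≤ h → ∀ γ : ℝ, γ ∈ Set.Ioo (0:ℝ) 1 → r0 ≤ ⌊γ * n⌋₊ →
      B2ᵀ * SigY2 μ y n h ⌊γ * n⌋₊ = 0) ∧
    spec (B1ᵀ * (∑ h ∈ Finset.Icc 1 h0, SigY1 μ y n h r0 * (SigY1 μ y n h r0)ᵀ) * B1) +
      spec (B2ᵀ * (∑ h ∈ Finset.Icc 1 h0, SigY2 μ y n h r0 * (SigY2 μ y n h r0)ᵀ) * B2)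
      = 0 := by
  have h1 : ∀ h r, 1 ≤ h → r ≤ r0 → B1ᵀ * SigY1 μ y n h r = 0 := fun _ _ hh hr =>
    mul_SigY1_eq_zero hB1A1 hL2x1 hL2e hee hx1e hmodel1 hh hr
  have h2 : ∀ h r, 1 ≤ h → r0 ≤ r → B2ᵀ * SigY2 μ y n h r = 0 := fun _ _ hh hr =>
    mul_SigY2_eq_zero hB2A2 hL2x2 hL2e hee hx2e hmodel2 hh hr
  refine ⟨fun h hh _ _ hr => h1 h _ hh hr, fun h hh _ _ hr => h2 h _ hh hr, ?_⟩
  rw [mul_sum_mul_transpose_mul_eq_zero B1 fun h hh => h1 h r0 (mem_Icc.mp hh).1 le_rfl,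
    mul_sum_mul_transpose_mul_eq_zero B2 fun h hh => h2 h r0 (mem_Icc.mp hh).1 le_rfl,
    spec_zero, spec_zero, add_zero]

/-- In the change-point factor model with white-noise orthogonality,
if `B_i` has orthonormal columns and `B_iᵀ A_i = 0`, then `B1ᵀ Σ_{y,1}(h,γ) = 0`
whenever `⌊γn⌋ ≤ r0`, `B2ᵀ Σ_{y,2}(h,γ) = 0` whenever `⌊γn⌋ ≥ r0`, and consequently
`G(γ0) = ‖B1ᵀ M_1(γ0) B1‖₂ + ‖B2ᵀ M_2(γ0) B2‖₂ = 0` (at `γ0`, `⌊γ0 n⌋ = r0`). -/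
theorem stmt8 {Ω : Type} [MeasurableSpace Ω] (μ : Measure Ω) [IsProbabilityMeasure μ]
    {p k1 k2 n r0 : ℕ} (hn : 0 < n) (hr0 : 1 ≤ r0) (hr0n : r0 ≤ n)
    (A1 : Matrix (Fin p) (Fin k1) ℝ) (A2 : Matrix (Fin p) (Fin k2) ℝ)
    (x1 : ℕ → Ω → Fin k1 → ℝ) (x2 : ℕ → Ω → Fin k2 → ℝ)
    (e : ℕ → Ω → Fin p → ℝ) (y : ℕ → Ω → Fin p → ℝ)
    (hL2x1 : ∀ t j, MemLp (fun ω => x1 t ω j) 2 μ)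
    (hL2x2 : ∀ t j, MemLp (fun ω => x2 t ω j) 2 μ)
    (hL2e : ∀ t i, MemLp (fun ω => e t ω i) 2 μ)
    (hmodel1 : ∀ t, 1 ≤ t → t ≤ r0 → ∀ ω, y t ω = A1.mulVec (x1 t ω) + e t ω)
    (hmodel2 : ∀ t, r0 < t → t ≤ n → ∀ ω, y t ω = A2.mulVec (x2 t ω) + e t ω)
    (hee : ∀ s t, s ≠ t → outerE μ (e s) (e t) = 0)
    (hx1e : ∀ t s, outerE μ (x1 t) (e s) = 0)
    (hx2e : ∀ t s, outerE μ (x2 t) (e s) = 0)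
    (B1 : Matrix (Fin p) (Fin (p - k1)) ℝ) (B2 : Matrix (Fin p) (Fin (p - k2)) ℝ)
    (hB1 : B1ᵀ * B1 = 1) (hB2 : B2ᵀ * B2 = 1)
    (hB1A1 : B1ᵀ * A1 = 0) (hB2A2 : B2ᵀ * A2 = 0)
    (h0 : ℕ) (hh0 : 1 ≤ h0) :
    (∀ h, 1 ≤ h → ∀ γ : ℝ, γ ∈ Set.Ioo (0:ℝ) 1 → ⌊γ * n⌋₊ ≤ r0 →
      B1ᵀ * SigY1 μ y n h ⌊γ * n⌋₊ = 0) ∧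
    (∀ h, 1 ≤ h → ∀ γ : ℝ, γ ∈ Set.Ioo (0:ℝ) 1 → r0 ≤ ⌊γ * n⌋₊ →
      B2ᵀ * SigY2 μ y n h ⌊γ * n⌋₊ = 0) ∧
    spec (B1ᵀ * (∑ h ∈ Finset.Icc 1 h0, SigY1 μ y n h r0 * (SigY1 μ y n h r0)ᵀ) * B1) +
      spec (B2ᵀ * (∑ h ∈ Finset.Icc 1 h0, SigY2 μ y n h r0 * (SigY2 μ y n h r0)ᵀ) * B2)
      = 0 :=
  stmt8_general μ A1 A2 x1 x2 e y hL2x1 hL2x2 hL2e hmodel1 hmodel2 hee hx1e hx2e B1 B2 hB1A1 hB2A2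
    h0
end

section
/- Let A ∈ ℝ^{p×k} have full column rank k ≤ p, let h0 ≥ 1 and Γ_h ∈ ℝ^{k×k} for h = 1,…,h0, and suppose at least one Γ_{h*} is invertible. Define M = Σ_{h=1}^{h0} A ( Γ_h AᵀA Γ_hᵀ ) Aᵀ. Then M is a symmetric positive semidefinite p×p matrix of rank k, its column space equals the column space of A, and every eigenvector of M associated with a nonzero eigenvalue lies in the column space of A. -/
/-!
Write `M = A N Aᴴ` with `N = ∑ₕ Γₕ (AᴴA) Γₕᴴ`. Full column rank makes `AᴴA` positive definite,
so every summand of `N` is positive semidefinite and the one with `Γₕ` invertible is positive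
definite; hence `N` is positive definite, in particular invertible. Then `N Aᴴ` is surjective
(`Aᴴ` has full row rank), so `M` and `A` have the same column space, and the rank and the
eigenvector statements follow from that.
-/

open Matrix Finset

namespace Matrix

variable {l m n K : Type*}

theorem mulVec_injective_of_rank_eq_card_width [Fintype n] [Field K] {A : Matrix m n K}
    (hA : A.rank = Fintype.card n) : Function.Injective A.mulVec := by
  have hker : Module.finrank K (LinearMap.ker A.mulVecLin) = 0 := by
    have := A.mulVecLin.finrank_range_add_finrank_ker
    rw [Module.finrank_fintype_fun_eq_card] at this
    change A.rank + _ = _ at this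
    omega
  exact LinearMap.ker_eq_bot.mp (Submodule.finrank_eq_zero.mp hker)

theorem mulVec_surjective_of_rank_eq_card_height [Fintype m] [Fintype n] [Field K]
    {A : Matrix m n K} (hA : A.rank = Fintype.card m) : Function.Surjective A.mulVec := by
  have hrange : LinearMap.range A.mulVecLin = ⊤ :=
    Submodule.eq_top_of_finrank_eq (hA.trans (Module.finrank_fintype_fun_eq_card K).symm)
  exact LinearMap.range_eq_top.mp hrange

theorem range_mulVecLin_mul_of_surjective [Fintype l] [Fintype n] [CommRing K]
    {A : Matrix m n K} {B : Matrix n l K} (hB : Function.Surjective B.mulVec) :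
    LinearMap.range (A * B).mulVecLin = LinearMap.range A.mulVecLin := by
  rw [mulVecLin_mul]
  exact LinearMap.range_comp_of_range_eq_top _ (LinearMap.range_eq_top.mpr hB)

theorem mem_range_mulVecLin_of_mulVec_eq_smul [Fintype m] [Field K] {M : Matrix m m K}
    {c : K} {v : m → K} (hc : c ≠ 0) (hv : M *ᵥ v = c • v) :
    v ∈ LinearMap.range M.mulVecLin :=
  ⟨c⁻¹ • v, by rw [mulVecLin_apply, mulVec_smul, hv, smul_smul, inv_mul_cancel₀ hc, one_smul]⟩

theorem range_mulVecLin_mul_mul_conjTranspose [Fintype m] [Fintype n] [DecidableEq n]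
    [Field K] [PartialOrder K] [StarRing K] [StarOrderedRing K] {A : Matrix m n K}
    (hA : A.rank = Fintype.card n) {N : Matrix n n K} (hN : IsUnit N) :
    LinearMap.range (A * N * Aᴴ).mulVecLin = LinearMap.range A.mulVecLin := by
  have hsurj : Function.Surjective Aᴴ.mulVec :=
    mulVec_surjective_of_rank_eq_card_height (by rw [rank_conjTranspose, hA])
  rw [Matrix.mul_assoc]
  refine range_mulVecLin_mul_of_surjective fun x => ?_
  obtain ⟨y, rfl⟩ := mulVec_surjective_iff_isUnit.mpr hN x
  obtain ⟨z, rfl⟩ := hsurj y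
  exact ⟨z, (mulVec_mulVec _ _ _).symm⟩

theorem PosDef.sum_mul_mul_conjTranspose [Fintype n] [DecidableEq n]
    [CommRing K] [PartialOrder K] [StarRing K] [StarOrderedRing K] {ι : Type*} {s : Finset ι}
    {S : Matrix n n K} (hS : S.PosDef) (G : ι → Matrix n n K) {i : ι} (hi : i ∈ s)
    (hG : IsUnit (G i)) : (∑ j ∈ s, G j * S * (G j)ᴴ).PosDef := by
  classical
  have hpos := hS.mul_mul_conjTranspose_same (vecMul_injective_of_isUnit hG)
  have hrest := posSemidef_sum (s.erase i) fun j _ ↦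
    hS.posSemidef.mul_mul_conjTranspose_same (G j)
  rw [← add_sum_erase s _ hi]
  exact hpos.add_posSemidef hrest

end Matrix

theorem stmt12_general {p k h0 : ℕ}
    (A : Matrix (Fin p) (Fin k) ℝ) (hA : A.rank = k)
    (G : ℕ → Matrix (Fin k) (Fin k) ℝ)
    (hinv : ∃ h ∈ Finset.Icc 1 h0, IsUnit (G h)) :
    ∀ M : Matrix (Fin p) (Fin p) ℝ,
      M = ∑ h ∈ Finset.Icc 1 h0, A * (G h * (Aᵀ * A) * (G h)ᵀ) * Aᵀ →
      (M.IsSymm ∧ M.PosSemidef ∧ M.rank = k ∧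
       LinearMap.range M.mulVecLin = LinearMap.range A.mulVecLin ∧
       ∀ (c : ℝ) (v : Fin p → ℝ), c ≠ 0 → M.mulVec v = c • v →
         v ∈ LinearMap.range A.mulVecLin) := by
  obtain ⟨i, hi, hGi⟩ := hinv
  intro M hM
  have hAcard : A.rank = Fintype.card (Fin k) := hA.trans (Fintype.card_fin k).symm
  set N := ∑ h ∈ Icc 1 h0, G h * (Aᴴ * A) * (G h)ᴴ
  have hMN : M = A * N * Aᴴ := by
    simp only [hM, N, conjTranspose_eq_transpose_of_trivial, Matrix.mul_sum, Matrix.sum_mul]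
  have hN : N.PosDef := PosDef.sum_mul_mul_conjTranspose
    (PosDef.conjTranspose_mul_self A (mulVec_injective_of_rank_eq_card_width hAcard)) G hi hGi
  have hPSD : M.PosSemidef := hMN ▸ hN.posSemidef.mul_mul_conjTranspose_same A
  have hrange : LinearMap.range M.mulVecLin = LinearMap.range A.mulVecLin :=
    hMN ▸ range_mulVecLin_mul_mul_conjTranspose hAcard hN.isUnit
  refine ⟨isHermitian_iff_isSymm.mp hPSD.isHermitian, hPSD, ?_, hrange, fun c v hc hv => ?_⟩
  · rw [rank, hrange]
    exact hA
  · exact hrange ▸ mem_range_mulVecLin_of_mulVec_eq_smul hc hv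

/-- If `A ∈ ℝ^{p×k}` has full column rank `k ≤ p`, `Γ_h ∈ ℝ^{k×k}` with
at least one `Γ_{h*}` invertible, and `M = Σ_{h=1}^{h0} A (Γ_h Aᵀ A Γ_hᵀ) Aᵀ`, then `M`
is symmetric positive semidefinite of rank `k`, its column space equals that of `A`,
and every eigenvector of `M` for a nonzero eigenvalue lies in the column space of `A`. -/
theorem stmt12 {p k h0 : ℕ} (hkp : k ≤ p) (hh0 : 1 ≤ h0)
    (A : Matrix (Fin p) (Fin k) ℝ) (hA : A.rank = k)
    (G : ℕ → Matrix (Fin k) (Fin k) ℝ)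
    (hinv : ∃ h ∈ Finset.Icc 1 h0, IsUnit (G h)) :
    ∀ M : Matrix (Fin p) (Fin p) ℝ,
      M = ∑ h ∈ Finset.Icc 1 h0, A * (G h * (Aᵀ * A) * (G h)ᵀ) * Aᵀ →
      (M.IsSymm ∧ M.PosSemidef ∧ M.rank = k ∧
       LinearMap.range M.mulVecLin = LinearMap.range A.mulVecLin ∧
       ∀ (c : ℝ) (v : Fin p → ℝ), c ≠ 0 → M.mulVec v = c • v →
         v ∈ LinearMap.range A.mulVecLin) :=
  stmt12_general A hA G hinv
end
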